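/- arXiv:2509.03314 — 6 statements merged into one kernel-verified Lean document; each statement's English description precedes it below -/
import Mathlib

section
/- Let A, B, C be three pairwise distinct points on the unit sphere S² in E³, no two of which are antipodal, such that the spherical angle of the triangle at A equals the sum of the spherical angles at B and at C (a properly angled spherical triangle with proper angle at A). Then cos(d_S(B,C)) = cos(d_S(A,B)) + cos(d_S(A,C)) − 1; equivalently, the area of the spherical disk of radius d_S(B,C) equals the sum of the areas of the spherical disks of radii d_S(A,B) and d_S(A,C). -/
open Real EuclideanSpace
open scoped RealInnerProductSpace

/-- Spherical distance between two points of the unit sphere in `E³`. -/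
noncomputable def sphDist (P Q : EuclideanSpace ℝ (Fin 3)) : ℝ :=
  Real.arccos ⟪P, Q⟫

/-- Spherical angle at `A` between `B` and `C`, i.e. the angle between the
tangent components of `B` and `C` at `A`. -/
noncomputable def sphAngle (A B C : EuclideanSpace ℝ (Fin 3)) : ℝ :=
  InnerProductGeometry.angle (B - ⟪A, B⟫ • A) (C - ⟪A, C⟫ • A)

/-!
Let `a = ⟪B, C⟫`, `b = ⟪A, C⟫`, `c = ⟪A, B⟫` and `α, β, γ` the angles at `A, B, C`. The spherical
law of cosines reads `cos α · √(1 - c²) √(1 - b²) = a - b c`, and `sin α · √(1 - c²) √(1 - b²)` is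
`√G` with `G = 1 + 2abc - a² - b² - c²` the Gram determinant of `A, B, C`, the same at every vertex.
Multiplying `cos β = cos (α - γ)` by `√(1 - c²) √(1 - a²) (1 - b²)` therefore gives a polynomial
identity, which factors as `(1 + b)(1 + a - b - c)(1 - a - b + c) = 0`; `γ = α - β` gives
`(1 + c)(1 + a - b - c)(1 - a + b - c) = 0` in the same way. As `b, c ≠ -1` and `a ≠ 1`, the common
factor vanishes: `a = b + c - 1`.
-/

open InnerProductGeometry

section Tangent

variable {V : Type*} [NormedAddCommGroup V] [InnerProductSpace ℝ V] {A B C : V}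

theorem inner_sub_inner_smul_sub_inner_smul (hA : ‖A‖ = 1) :
    ⟪B - ⟪A, B⟫ • A, C - ⟪A, C⟫ • A⟫ = ⟪B, C⟫ - ⟪A, B⟫ * ⟪A, C⟫ := by
  have hAA : ⟪A, A⟫ = 1 := by rw [real_inner_self_eq_norm_sq, hA, one_pow]
  simp only [inner_sub_left, inner_sub_right, real_inner_smul_left, real_inner_smul_right, hAA,
    real_inner_comm A B]
  ring

theorem norm_sub_inner_smul_of_norm_eq_one (hA : ‖A‖ = 1) (hB : ‖B‖ = 1) :
    ‖B - ⟪A, B⟫ • A‖ = √(1 - ⟪A, B⟫ ^ 2) := by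
  rw [← Real.sqrt_sq (norm_nonneg _), ← real_inner_self_eq_norm_sq,
    inner_sub_inner_smul_sub_inner_smul hA, real_inner_self_eq_norm_sq, hB, one_pow, sq]

theorem gram_sub_inner_smul (hA : ‖A‖ = 1) (hB : ‖B‖ = 1) (hC : ‖C‖ = 1) :
    ⟪B - ⟪A, B⟫ • A, B - ⟪A, B⟫ • A⟫ * ⟪C - ⟪A, C⟫ • A, C - ⟪A, C⟫ • A⟫
      - ⟪B - ⟪A, B⟫ • A, C - ⟪A, C⟫ • A⟫ * ⟪B - ⟪A, B⟫ • A, C - ⟪A, C⟫ • A⟫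
      = 1 + 2 * ⟪A, B⟫ * ⟪A, C⟫ * ⟪B, C⟫ - ⟪A, B⟫ ^ 2 - ⟪A, C⟫ ^ 2 - ⟪B, C⟫ ^ 2 := by
  simp only [inner_sub_inner_smul_sub_inner_smul hA, real_inner_self_eq_norm_sq, hB, hC]
  ring

theorem spherical_gram_nonneg (hA : ‖A‖ = 1) (hB : ‖B‖ = 1) (hC : ‖C‖ = 1) :
    0 ≤ 1 + 2 * ⟪A, B⟫ * ⟪A, C⟫ * ⟪B, C⟫ - ⟪A, B⟫ ^ 2 - ⟪A, C⟫ ^ 2 - ⟪B, C⟫ ^ 2 := by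
  rw [← gram_sub_inner_smul hA hB hC, sub_nonneg]
  exact real_inner_mul_inner_self_le _ _

theorem cos_angle_sub_inner_smul_mul (hA : ‖A‖ = 1) (hB : ‖B‖ = 1) (hC : ‖C‖ = 1) :
    Real.cos (angle (B - ⟪A, B⟫ • A) (C - ⟪A, C⟫ • A)) * (√(1 - ⟪A, B⟫ ^ 2) * √(1 - ⟪A, C⟫ ^ 2))
      = ⟪B, C⟫ - ⟪A, B⟫ * ⟪A, C⟫ := by
  rw [← norm_sub_inner_smul_of_norm_eq_one hA hB, ← norm_sub_inner_smul_of_norm_eq_one hA hC,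
    cos_angle_mul_norm_mul_norm, inner_sub_inner_smul_sub_inner_smul hA]

theorem sin_angle_sub_inner_smul_mul (hA : ‖A‖ = 1) (hB : ‖B‖ = 1) (hC : ‖C‖ = 1) :
    Real.sin (angle (B - ⟪A, B⟫ • A) (C - ⟪A, C⟫ • A)) * (√(1 - ⟪A, B⟫ ^ 2) * √(1 - ⟪A, C⟫ ^ 2))
      = √(1 + 2 * ⟪A, B⟫ * ⟪A, C⟫ * ⟪B, C⟫ - ⟪A, B⟫ ^ 2 - ⟪A, C⟫ ^ 2 - ⟪B, C⟫ ^ 2) := by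
  rw [← norm_sub_inner_smul_of_norm_eq_one hA hB, ← norm_sub_inner_smul_of_norm_eq_one hA hC,
    sin_angle_mul_norm_mul_norm, gram_sub_inner_smul hA hB hC]

end Tangent

theorem sphAngle_comm (A B C : EuclideanSpace ℝ (Fin 3)) : sphAngle A B C = sphAngle A C B :=
  angle_comm _ _

theorem cos_sphDist {P Q : EuclideanSpace ℝ (Fin 3)} (hP : ‖P‖ = 1) (hQ : ‖Q‖ = 1) :
    Real.cos (sphDist P Q) = ⟪P, Q⟫ :=
  Real.cos_arccos (neg_one_le_real_inner_of_norm_eq_one hP hQ)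
    (real_inner_le_one_of_norm_eq_one hP hQ)

theorem mul_mul_eq_zero_of_sphAngle_eq_sub {A B C : EuclideanSpace ℝ (Fin 3)}
    (hA : ‖A‖ = 1) (hB : ‖B‖ = 1) (hC : ‖C‖ = 1)
    (h : sphAngle B A C = sphAngle A B C - sphAngle C A B) :
    (1 + ⟪A, C⟫) * ((1 + ⟪B, C⟫ - ⟪A, C⟫ - ⟪A, B⟫) * (1 - ⟪B, C⟫ - ⟪A, C⟫ + ⟪A, B⟫)) = 0 := by
  have cosA : Real.cos (sphAngle A B C) * _ = _ := cos_angle_sub_inner_smul_mul hA hB hC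
  have sinA : Real.sin (sphAngle A B C) * _ = _ := sin_angle_sub_inner_smul_mul hA hB hC
  have cosB : Real.cos (sphAngle B A C) * _ = _ := cos_angle_sub_inner_smul_mul hB hA hC
  have cosC : Real.cos (sphAngle C A B) * _ = _ := cos_angle_sub_inner_smul_mul hC hA hB
  have sinC : Real.sin (sphAngle C A B) * _ = _ := sin_angle_sub_inner_smul_mul hC hA hB
  have hG := spherical_gram_nonneg hA hB hC
  have hb2 : √(1 - ⟪A, C⟫ ^ 2) ^ 2 = 1 - ⟪A, C⟫ ^ 2 :=
    Real.sq_sqrt (sub_nonneg.2 ((sq_le_one_iff_abs_le_one _).2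
      (abs_le.2 (real_inner_mem_Icc_of_norm_eq_one hA hC))))
  simp only [real_inner_comm A B, real_inner_comm A C, real_inner_comm B C] at cosB cosC sinC
  set a := ⟪B, C⟫
  set b := ⟪A, C⟫
  set c := ⟪A, B⟫
  rw [show 1 + 2 * b * a * c - b ^ 2 - a ^ 2 - c ^ 2 = 1 + 2 * c * b * a - c ^ 2 - b ^ 2 - a ^ 2
    by ring] at sinC
  set G := 1 + 2 * c * b * a - c ^ 2 - b ^ 2 - a ^ 2
  set sa := √(1 - a ^ 2)
  set sb := √(1 - b ^ 2)
  set sc := √(1 - c ^ 2)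
  set α := sphAngle A B C
  set γ := sphAngle C A B
  have key : (b - c * a) * (1 - b ^ 2) = (a - c * b) * (c - b * a) + G :=
    calc (b - c * a) * (1 - b ^ 2) = Real.cos (α - γ) * (sc * sa) * sb ^ 2 := by
          rw [← h, cosB, hb2]
      _ = Real.cos α * (sc * sb) * (Real.cos γ * (sb * sa))
            + Real.sin α * (sc * sb) * (Real.sin γ * (sb * sa)) := by
          rw [Real.cos_sub]; ring
      _ = (a - c * b) * (c - b * a) + G := by
          rw [cosA, cosC, sinA, sinC, Real.mul_self_sqrt hG]
  linear_combination -key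

theorem spherical_pythagoras_general
    (A B C : EuclideanSpace ℝ (Fin 3))
    (hA : ‖A‖ = 1) (hB : ‖B‖ = 1) (hC : ‖C‖ = 1)
    (hBC : B ≠ C)
    (hAB' : A ≠ -B) (hAC' : A ≠ -C)
    (hangle : sphAngle A B C = sphAngle B A C + sphAngle C A B) :
    Real.cos (sphDist B C) = Real.cos (sphDist A B) + Real.cos (sphDist A C) - 1 := by
  have hb := mul_mul_eq_zero_of_sphAngle_eq_sub hA hB hC (by linarith)
  have hc := mul_mul_eq_zero_of_sphAngle_eq_sub hA hC hB (by rw [sphAngle_comm A C B]; linarith)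
  rw [real_inner_comm B C] at hc
  have ha1 : 1 - ⟪B, C⟫ ≠ 0 :=
    fun h ↦ hBC ((inner_eq_one_iff_of_norm_eq_one (𝕜 := ℝ) hB hC).1 (by linarith))
  have hb1 : 1 + ⟪A, C⟫ ≠ 0 :=
    fun h ↦ hAC' ((inner_eq_neg_one_iff_of_norm_eq_one (𝕜 := ℝ) hA hC).1 (by linarith))
  have hc1 : 1 + ⟪A, B⟫ ≠ 0 :=
    fun h ↦ hAB' ((inner_eq_neg_one_iff_of_norm_eq_one (𝕜 := ℝ) hA hB).1 (by linarith))
  have hb' := (mul_eq_zero.1 hb).resolve_left hb1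
  have hc' := (mul_eq_zero.1 hc).resolve_left hc1
  have hsum : (1 + ⟪B, C⟫ - ⟪A, C⟫ - ⟪A, B⟫) * (2 * (1 - ⟪B, C⟫)) = 0 := by
    linear_combination hb' + hc'
  have hside := (mul_eq_zero.1 hsum).resolve_right (mul_ne_zero two_ne_zero ha1)
  rw [cos_sphDist hB hC, cos_sphDist hA hB, cos_sphDist hA hC]
  linarith

theorem spherical_pythagoras
    (A B C : EuclideanSpace ℝ (Fin 3))
    (hA : ‖A‖ = 1) (hB : ‖B‖ = 1) (hC : ‖C‖ = 1)
    (hAB : A ≠ B) (hAC : A ≠ C) (hBC : B ≠ C)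
    (hAB' : A ≠ -B) (hAC' : A ≠ -C) (hBC' : B ≠ -C)
    (hangle : sphAngle A B C = sphAngle B A C + sphAngle C A B) :
    Real.cos (sphDist B C) = Real.cos (sphDist A B) + Real.cos (sphDist A C) - 1 :=
  spherical_pythagoras_general A B C hA hB hC hBC hAB' hAC' hangle
end

section
/- Let A, B, C be three pairwise distinct points on the unit sphere S², no two of which are antipodal. Then the spherical angle of the triangle at A equals the sum of the spherical angles at B and at C if and only if ⟪B − A, C − A⟫ = 0, i.e., if and only if the Euclidean triangle on the chords has a right angle at A in the ambient space E³. -/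
/-!
Write `a = ⟪B, C⟫`, `b = ⟪A, C⟫`, `c = ⟪A, B⟫` and `α, β, γ` for the spherical angles at
`A, B, C`. The spherical laws of cosines and sines express `cos` and `sin` of each angle through
`a, b, c` and the square root of the Gram determinant `1 + 2abc - a² - b² - c²`; expanding
`cos (α - β - γ)` makes the Gram determinant cancel and leaves
`cos (α - β - γ) = 1 - (1 + a - b - c)² / ((1 + a) (1 - b) (1 - c))`,
where `1 + a - b - c = ⟪B - A, C - A⟫`. So `α = β + γ` forces the Euclidean right angle at `A`.
Conversely, a right angle gives `cos (α - β - γ) = 1` and `α > 0`, and since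
`α - β - γ ∈ (-2π, π]` this means `α = β + γ`.
-/

open Real EuclideanSpace
open scoped RealInnerProductSpace

open InnerProductGeometry

section UnitVectors

variable {V : Type*} [NormedAddCommGroup V] [InnerProductSpace ℝ V] {P Q R : V}

theorem abs_real_inner_lt_one_of_norm_eq_one (hP : ‖P‖ = 1) (hQ : ‖Q‖ = 1) (hPQ : P ≠ Q)
    (hPQ' : P ≠ -Q) : |⟪P, Q⟫| < 1 :=
  abs_lt.2 ⟨(neg_one_le_real_inner_of_norm_eq_one hP hQ).lt_of_ne
      fun h => hPQ' ((inner_eq_neg_one_iff_of_norm_eq_one hP hQ).1 h.symm),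
    (inner_lt_one_iff_real_of_norm_eq_one hP hQ).2 hPQ⟩

theorem real_inner_sub_sub_of_norm_eq_one (hP : ‖P‖ = 1) :
    ⟪Q - P, R - P⟫ = 1 + ⟪Q, R⟫ - ⟪P, R⟫ - ⟪P, Q⟫ := by
  simp only [inner_sub_left, inner_sub_right, real_inner_self_eq_norm_sq, hP, real_inner_comm P Q]
  ring

theorem real_inner_sub_inner_smul_of_norm_eq_one (hP : ‖P‖ = 1) :
    ⟪Q - ⟪P, Q⟫ • P, R - ⟪P, R⟫ • P⟫ = ⟪Q, R⟫ - ⟪P, Q⟫ * ⟪P, R⟫ := by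
  simp only [inner_sub_left, inner_sub_right, real_inner_smul_left, real_inner_smul_right,
    real_inner_self_eq_norm_sq, hP, real_inner_comm Q P]
  ring

theorem norm_sub_inner_smul_of_norm_eq_one_s3 (hP : ‖P‖ = 1) (hQ : ‖Q‖ = 1) :
    ‖Q - ⟪P, Q⟫ • P‖ = √(1 - ⟪P, Q⟫ ^ 2) := by
  rw [norm_eq_sqrt_real_inner, real_inner_sub_inner_smul_of_norm_eq_one hP,
    real_inner_self_eq_norm_sq, hQ]
  ring_nf

end UnitVectors

section SphAngle

variable {P Q R : EuclideanSpace ℝ (Fin 3)}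

theorem sphAngle_mem_Icc : sphAngle P Q R ∈ Set.Icc 0 π :=
  ⟨angle_nonneg _ _, angle_le_pi _ _⟩

theorem cos_sphAngle_mul (hP : ‖P‖ = 1) (hQ : ‖Q‖ = 1) (hR : ‖R‖ = 1) :
    cos (sphAngle P Q R) * (√(1 - ⟪P, Q⟫ ^ 2) * √(1 - ⟪P, R⟫ ^ 2)) =
      ⟪Q, R⟫ - ⟪P, Q⟫ * ⟪P, R⟫ := by
  rw [← norm_sub_inner_smul_of_norm_eq_one_s3 hP hQ, ← norm_sub_inner_smul_of_norm_eq_one_s3 hP hR,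
    sphAngle, cos_angle_mul_norm_mul_norm, real_inner_sub_inner_smul_of_norm_eq_one hP]

theorem sin_sphAngle_mul (hP : ‖P‖ = 1) (hQ : ‖Q‖ = 1) (hR : ‖R‖ = 1) :
    sin (sphAngle P Q R) * (√(1 - ⟪P, Q⟫ ^ 2) * √(1 - ⟪P, R⟫ ^ 2)) =
      √(1 + 2 * ⟪P, Q⟫ * ⟪P, R⟫ * ⟪Q, R⟫ - ⟪P, Q⟫ ^ 2 - ⟪P, R⟫ ^ 2 - ⟪Q, R⟫ ^ 2) := by
  rw [← norm_sub_inner_smul_of_norm_eq_one_s3 hP hQ, ← norm_sub_inner_smul_of_norm_eq_one_s3 hP hR,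
    sphAngle, sin_angle_mul_norm_mul_norm]
  simp only [real_inner_sub_inner_smul_of_norm_eq_one hP, real_inner_self_eq_norm_sq, hQ, hR]
  ring_nf

end SphAngle

theorem cos_sub_sub_mul_eq_of_spherical_laws {α β γ a b c sa sb sc g : ℝ}
    (hsa : sa ^ 2 = 1 - a ^ 2) (hsb : sb ^ 2 = 1 - b ^ 2) (hsc : sc ^ 2 = 1 - c ^ 2)
    (hcα : cos α * (sc * sb) = a - c * b) (hsα : sin α * (sc * sb) = g)
    (hcβ : cos β * (sc * sa) = b - c * a) (hsβ : sin β * (sc * sa) = g)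
    (hcγ : cos γ * (sb * sa) = c - b * a) (hsγ : sin γ * (sb * sa) = g) :
    cos (α - β - γ) * ((1 - a ^ 2) * (1 - b ^ 2) * (1 - c ^ 2)) =
      (1 - a ^ 2) * (1 - b ^ 2) * (1 - c ^ 2) -
        (1 + a - b - c) ^ 2 * ((1 - a) * (1 + b) * (1 + c)) := by
  have hg : g ^ 2 = 1 + 2 * a * b * c - a ^ 2 - b ^ 2 - c ^ 2 := by
    linear_combination (-(sin α * (sc * sb) + g)) * hsα - (cos α * (sc * sb) + (a - c * b)) * hcα
      + sc ^ 2 * sb ^ 2 * sin_sq_add_cos_sq α + sb ^ 2 * hsc + (1 - c ^ 2) * hsb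
  have hexpand : cos (α - β - γ) * (sa ^ 2 * sb ^ 2 * sc ^ 2) =
      (a - c * b) * (b - c * a) * (c - b * a) +
        g ^ 2 * ((b - c * a) + (c - b * a) - (a - c * b)) := by
    rw [cos_sub, cos_sub, sin_sub]
    -- Each monomial of the expansion has one factor per angle, and `sa² sb² sc²` supplies
    -- exactly the scaling of all three.
    linear_combination
      ((cos β * cos γ - sin β * sin γ) * sa ^ 2 * sb * sc) * hcα
      + ((sin β * cos γ + cos β * sin γ) * sa ^ 2 * sb * sc) * hsα
      + (((a - c * b) * cos γ + g * sin γ) * sa * sb) * hcβ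
      + ((g * cos γ - (a - c * b) * sin γ) * sa * sb) * hsβ
      + ((a - c * b) * (b - c * a) + g ^ 2) * hcγ
      + (g * (b - c * a) - (a - c * b) * g) * hsγ
  rw [hsa, hsb, hsc, hg] at hexpand
  linear_combination hexpand

theorem eq_add_iff_of_spherical_laws {α β γ a b c g : ℝ}
    (ha : |a| < 1) (hb : |b| < 1) (hc : |c| < 1)
    (hα : α ∈ Set.Icc 0 π) (hβ : β ∈ Set.Icc 0 π) (hγ : γ ∈ Set.Icc 0 π)
    (hcα : cos α * (√(1 - c ^ 2) * √(1 - b ^ 2)) = a - c * b)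
    (hsα : sin α * (√(1 - c ^ 2) * √(1 - b ^ 2)) = g)
    (hcβ : cos β * (√(1 - c ^ 2) * √(1 - a ^ 2)) = b - c * a)
    (hsβ : sin β * (√(1 - c ^ 2) * √(1 - a ^ 2)) = g)
    (hcγ : cos γ * (√(1 - b ^ 2) * √(1 - a ^ 2)) = c - b * a)
    (hsγ : sin γ * (√(1 - b ^ 2) * √(1 - a ^ 2)) = g) :
    α = β + γ ↔ 1 + a - b - c = 0 := by
  obtain ⟨ha₁, ha₂⟩ := abs_lt.1 ha
  obtain ⟨hb₁, hb₂⟩ := abs_lt.1 hb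
  obtain ⟨hc₁, hc₂⟩ := abs_lt.1 hc
  have hsq {x : ℝ} (hx : |x| < 1) : √(1 - x ^ 2) ^ 2 = 1 - x ^ 2 :=
    sq_sqrt (by nlinarith [abs_lt.1 hx])
  have key := cos_sub_sub_mul_eq_of_spherical_laws (hsq ha) (hsq hb) (hsq hc)
    hcα hsα hcβ hsβ hcγ hsγ
  constructor
  · intro h
    rw [h, show β + γ - β - γ = 0 by ring, cos_zero, one_mul] at key
    have hpos : 0 < (1 - a) * (1 + b) * (1 + c) :=
      mul_pos (mul_pos (by linarith) (by linarith)) (by linarith)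
    have hsq0 : (1 + a - b - c) ^ 2 = 0 := by
      simpa [hpos.ne'] using (sub_eq_self.1 key.symm)
    exact pow_eq_zero_iff two_ne_zero |>.1 hsq0
  · intro h
    have hdet : 0 < (1 - a ^ 2) * (1 - b ^ 2) * (1 - c ^ 2) := by
      refine mul_pos (mul_pos ?_ ?_) ?_ <;> nlinarith
    have hcos : cos (α - β - γ) = 1 := by
      rw [h, zero_pow two_ne_zero, zero_mul, sub_zero] at key
      exact (mul_eq_right₀ hdet.ne').1 key
    -- `a - c * b = -(1 - b) * (1 - c) < 0` at a right angle, so `cos α ≠ 1`.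
    have hα₀ : α ≠ 0 := by
      rintro rfl
      rw [cos_zero, one_mul] at hcα
      nlinarith [mul_pos (sub_pos.2 hb₂) (sub_pos.2 hc₂),
        mul_nonneg (sqrt_nonneg (1 - c ^ 2)) (sqrt_nonneg (1 - b ^ 2))]
    have := (cos_eq_one_iff_of_lt_of_lt (by linarith [hα.1.lt_of_ne' hα₀, hβ.2, hγ.2])
      (by linarith [hα.2, hβ.1, hγ.1, pi_pos])).1 hcos
    linarith

theorem spherical_properly_angled_iff_euclidean_right_angle
    (A B C : EuclideanSpace ℝ (Fin 3))
    (hA : ‖A‖ = 1) (hB : ‖B‖ = 1) (hC : ‖C‖ = 1)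
    (hAB : A ≠ B) (hAC : A ≠ C) (hBC : B ≠ C)
    (hAB' : A ≠ -B) (hAC' : A ≠ -C) (hBC' : B ≠ -C) :
    sphAngle A B C = sphAngle B A C + sphAngle C A B ↔ ⟪B - A, C - A⟫ = 0 := by
  have hcβ := cos_sphAngle_mul hB hA hC
  have hsβ := sin_sphAngle_mul hB hA hC
  have hcγ := cos_sphAngle_mul hC hA hB
  have hsγ := sin_sphAngle_mul hC hA hB
  rw [real_inner_comm A B] at hcβ hsβ
  rw [real_inner_comm A C, real_inner_comm B C] at hcγ hsγ
  rw [real_inner_sub_sub_of_norm_eq_one hA]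
  refine eq_add_iff_of_spherical_laws (abs_real_inner_lt_one_of_norm_eq_one hB hC hBC hBC')
    (abs_real_inner_lt_one_of_norm_eq_one hA hC hAC hAC')
    (abs_real_inner_lt_one_of_norm_eq_one hA hB hAB hAB')
    sphAngle_mem_Icc sphAngle_mem_Icc sphAngle_mem_Icc
    (cos_sphAngle_mul hA hB hC) (sin_sphAngle_mul hA hB hC) hcβ (hsβ.trans ?_) hcγ (hsγ.trans ?_)
    <;> ring_nf -- the Gram determinant is symmetric in `a, b, c`
end

section
/- Let A, B, C be three pairwise distinct points on the hyperboloid H² such that the hyperbolic angle of the triangle at A equals the sum of the hyperbolic angles at B and at C (a properly angled hyperbolic triangle with proper angle at A). Then cosh(d_H(B,C)) = cosh(d_H(A,B)) + cosh(d_H(A,C)) − 1; equivalently, the area of the hyperbolic disk of radius d_H(B,C) equals the sum of the areas of the hyperbolic disks of radii d_H(A,B) and d_H(A,C). -/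
open Real

/-- The Minkowski bilinear form on `ℝ³`. -/
def mink (x y : Fin 3 → ℝ) : ℝ := x 0 * y 0 + x 1 * y 1 - x 2 * y 2

/-- Membership in the hyperboloid model `H²` of the hyperbolic plane. -/
def memH2 (x : Fin 3 → ℝ) : Prop := mink x x = -1 ∧ 0 < x 2

/-- The inverse hyperbolic cosine (`arcosh`). -/
noncomputable def arcosh (x : ℝ) : ℝ := Real.log (x + Real.sqrt (x ^ 2 - 1))

/-- Hyperbolic distance between points of the hyperboloid `H²`. -/
noncomputable def hypDist (P Q : Fin 3 → ℝ) : ℝ := _root_.arcosh (-(mink P Q))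

/-- Hyperbolic angle at `A` between `B` and `C`: the unique `θ ∈ [0, π]` whose
cosine is `𝔅(u,v)/√(𝔅(u,u)·𝔅(v,v))`, where `u, v` are the tangent components of
`B, C` at `A`. -/
noncomputable def hypAngle (A B C : Fin 3 → ℝ) : ℝ :=
  Real.arccos (mink (B + mink A B • A) (C + mink A C • A) /
    Real.sqrt (mink (B + mink A B • A) (B + mink A B • A) *
      mink (C + mink A C • A) (C + mink A C • A)))

/-!
Write `a, b, c` for the hyperbolic cosines of the sides `BC, AB, AC`; on `H²` these are
`-𝔅(B,C), -𝔅(A,B), -𝔅(A,C)`. The tangent vectors of the angle definition have Minkowski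
products `bc - a` and norms `√(b² - 1), √(c² - 1)`, which is the hyperbolic law of cosines, and
the sine of every angle is `√D` over the product of the two adjacent `sinh`s, where
`D = 1 + 2abc - a² - b² - c² = det(A, B, C)² ≥ 0` is minus the Minkowski Gram determinant.
Taking cosines in `α = β + γ` and clearing denominators leaves
`(bc - a)(a² - 1) = (ab - c)(ac - b) - D`, which factors as
`(a - 1)(a + 1 - b - c)(a + 1 + b + c) = 0`; as `a, b, c > 1`, this forces `a = b + c - 1`.
-/

lemma mink_comm (x y : Fin 3 → ℝ) : mink x y = mink y x := by
  simp only [mink]; ring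

lemma mink_tangent {P : Fin 3 → ℝ} (hP : memH2 P) (Q R : Fin 3 → ℝ) :
    mink (Q + mink P Q • P) (R + mink P R • P) = mink Q R + mink P Q * mink P R := by
  have hP1 : P 0 * P 0 + P 1 * P 1 - P 2 * P 2 = -1 := hP.1
  simp only [mink, Pi.add_apply, Pi.smul_apply, smul_eq_mul]
  linear_combination
    (P 0 * Q 0 + P 1 * Q 1 - P 2 * Q 2) * (P 0 * R 0 + P 1 * R 1 - P 2 * R 2) * hP1

lemma one_lt_neg_mink {P Q : Fin 3 → ℝ} (hP : memH2 P) (hQ : memH2 Q) (hPQ : P ≠ Q) :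
    1 < -mink P Q := by
  obtain ⟨hP1, hP2⟩ := hP
  obtain ⟨hQ1, hQ2⟩ := hQ
  simp only [mink] at hP1 hQ1 ⊢
  have hgap : 0 < (P 0 - Q 0) ^ 2 + (P 1 - Q 1) ^ 2 := by
    by_contra! h
    have h0 : P 0 = Q 0 := by nlinarith
    have h1 : P 1 = Q 1 := by nlinarith
    have h2 : P 2 = Q 2 :=
      (pow_left_inj₀ hP2.le hQ2.le two_ne_zero).mp (by rw [h0, h1] at hP1; linarith)
    exact hPQ (funext fun i => by fin_cases i <;> assumption)
  have lagrange : (P 2 * Q 2) ^ 2 - (1 + P 0 * Q 0 + P 1 * Q 1) ^ 2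
      = (P 0 - Q 0) ^ 2 + (P 1 - Q 1) ^ 2 + (P 0 * Q 1 - P 1 * Q 0) ^ 2 := by
    linear_combination (-(Q 2 ^ 2)) * hP1 - (1 + P 0 ^ 2 + P 1 ^ 2) * hQ1
  have hlt := abs_lt_of_sq_lt_sq
    (show (1 + P 0 * Q 0 + P 1 * Q 1) ^ 2 < (P 2 * Q 2) ^ 2 by
      nlinarith [sq_nonneg (P 0 * Q 1 - P 1 * Q 0)])
    (mul_pos hP2 hQ2).le
  linarith [le_abs_self (1 + P 0 * Q 0 + P 1 * Q 1)]

lemma cosh_hypDist {P Q : Fin 3 → ℝ} (hP : memH2 P) (hQ : memH2 Q) (hPQ : P ≠ Q) :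
    cosh (hypDist P Q) = -mink P Q :=
  Real.cosh_arcosh (one_lt_neg_mink hP hQ hPQ).le

lemma minkGram_det (v : Fin 3 → Fin 3 → ℝ) :
    (Matrix.of fun i j => mink (v i) (v j)).det = -(Matrix.of v).det ^ 2 := by
  simp only [Matrix.det_fin_three, Matrix.of_apply, mink]
  ring

/-- The determinant of `!![1, b, c; b, 1, a; c, a, 1]`, i.e. minus the Minkowski Gram
determinant of a triangle on `H²` whose sides have hyperbolic cosines `a, b, c`. -/
def coshGramDet (a b c : ℝ) : ℝ := 1 + 2 * a * b * c - a ^ 2 - b ^ 2 - c ^ 2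

lemma coshGramDet_eq (a b c : ℝ) :
    coshGramDet a b c = (b ^ 2 - 1) * (c ^ 2 - 1) - (b * c - a) ^ 2 := by
  unfold coshGramDet; ring

lemma coshGramDet_eq_det_sq {A B C : Fin 3 → ℝ} (hA : memH2 A) (hB : memH2 B) (hC : memH2 C) :
    coshGramDet (-mink B C) (-mink A B) (-mink A C) = (Matrix.of ![A, B, C]).det ^ 2 := by
  have h := minkGram_det ![A, B, C]
  rw [Matrix.det_fin_three (Matrix.of _)] at h
  simp only [Matrix.of_apply, Matrix.cons_val_zero, Matrix.cons_val_one, Matrix.cons_val_two,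
    Matrix.tail_cons, Matrix.head_cons, hA.1, hB.1, hC.1, mink_comm B A, mink_comm C A,
    mink_comm C B] at h
  unfold coshGramDet
  linear_combination -h

/-- By the hyperbolic law of cosines, the angle opposite the side with hyperbolic cosine `a`
in a triangle whose other two sides have hyperbolic cosines `b` and `c`. -/
noncomputable def angleOfCoshSides (a b c : ℝ) : ℝ :=
  arccos ((b * c - a) / √((b ^ 2 - 1) * (c ^ 2 - 1)))

lemma hypAngle_eq_angleOfCoshSides {P Q R : Fin 3 → ℝ}
    (hP : memH2 P) (hQ : memH2 Q) (hR : memH2 R) :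
    hypAngle P Q R = angleOfCoshSides (-mink Q R) (-mink P Q) (-mink P R) := by
  rw [hypAngle, angleOfCoshSides, mink_tangent hP, mink_tangent hP, mink_tangent hP, hQ.1, hR.1]
  ring_nf

lemma sin_arccos_div_sqrt (x : ℝ) {y : ℝ} (hy : 0 < y) :
    sin (arccos (x / √y)) = √(y - x ^ 2) / √y := by
  rw [sin_arccos, div_pow, sq_sqrt hy.le, one_sub_div hy.ne', sqrt_div' _ hy.le]

lemma cos_arccos_div_sqrt {x y : ℝ} (hxy : x ^ 2 ≤ y) : cos (arccos (x / √y)) = x / √y := by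
  have h : |x / √y| ≤ 1 := by
    rw [abs_div, abs_of_nonneg (sqrt_nonneg y)]
    exact div_le_one_of_le₀ (abs_le_sqrt hxy) (sqrt_nonneg y)
  exact cos_arccos (abs_le.mp h).1 (abs_le.mp h).2

section angleOfCoshSides

variable {a b c : ℝ}

lemma cos_angleOfCoshSides (hb : 1 < b) (hD : 0 ≤ coshGramDet a b c) :
    cos (angleOfCoshSides a b c) = (b * c - a) / (√(b ^ 2 - 1) * √(c ^ 2 - 1)) := by
  rw [coshGramDet_eq, sub_nonneg] at hD
  rw [angleOfCoshSides, cos_arccos_div_sqrt hD, sqrt_mul (by nlinarith)]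

lemma sin_angleOfCoshSides (hb : 1 < b) (hc : 1 < c) :
    sin (angleOfCoshSides a b c) = √(coshGramDet a b c) / (√(b ^ 2 - 1) * √(c ^ 2 - 1)) := by
  rw [angleOfCoshSides, sin_arccos_div_sqrt _ (mul_pos (by nlinarith) (by nlinarith)),
    sqrt_mul (by nlinarith), coshGramDet_eq]

lemma eq_add_sub_one_of_angleOfCoshSides_eq_add (ha : 1 < a) (hb : 1 < b) (hc : 1 < c)
    (hD : 0 ≤ coshGramDet a b c)
    (h : angleOfCoshSides a b c = angleOfCoshSides c b a + angleOfCoshSides b c a) :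
    a = b + c - 1 := by
  have hDβ : coshGramDet c b a = coshGramDet a b c := by unfold coshGramDet; ring
  have hDγ : coshGramDet b c a = coshGramDet a b c := by unfold coshGramDet; ring
  have hcos := congrArg cos h
  rw [cos_add, cos_angleOfCoshSides hb hD, cos_angleOfCoshSides hb (by rwa [hDβ]),
    cos_angleOfCoshSides hc (by rwa [hDγ]), sin_angleOfCoshSides hb ha,
    sin_angleOfCoshSides hc ha, hDβ, hDγ] at hcos
  have hsa : 0 < √(a ^ 2 - 1) := sqrt_pos.mpr (by nlinarith)
  have hsb : 0 < √(b ^ 2 - 1) := sqrt_pos.mpr (by nlinarith)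
  have hsc : 0 < √(c ^ 2 - 1) := sqrt_pos.mpr (by nlinarith)
  field_simp at hcos
  rw [sq_sqrt hD, sq_sqrt (by nlinarith)] at hcos
  have hfactor : (a - 1) * (a + 1 - (b + c)) * (a + 1 + (b + c)) = 0 := by
    unfold coshGramDet at hcos
    linear_combination -hcos
  simp only [mul_eq_zero] at hfactor
  rcases hfactor with (h | h) | h <;> linarith

end angleOfCoshSides

theorem hyperbolic_pythagoras
    (A B C : Fin 3 → ℝ)
    (hA : memH2 A) (hB : memH2 B) (hC : memH2 C)
    (hAB : A ≠ B) (hAC : A ≠ C) (hBC : B ≠ C)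
    (hangle : hypAngle A B C = hypAngle B A C + hypAngle C A B) :
    Real.cosh (hypDist B C) = Real.cosh (hypDist A B) + Real.cosh (hypDist A C) - 1 := by
  rw [hypAngle_eq_angleOfCoshSides hA hB hC, hypAngle_eq_angleOfCoshSides hB hA hC,
    hypAngle_eq_angleOfCoshSides hC hA hB, mink_comm B A, mink_comm C A, mink_comm C B] at hangle
  rw [cosh_hypDist hB hC hBC, cosh_hypDist hA hC hAC, cosh_hypDist hA hB hAB]
  exact eq_add_sub_one_of_angleOfCoshSides_eq_add (one_lt_neg_mink hB hC hBC)
    (one_lt_neg_mink hA hB hAB) (one_lt_neg_mink hA hC hAC)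
    (coshGramDet_eq_det_sq hA hB hC ▸ sq_nonneg _) hangle
end

section
/- (Spherical Pythagorean theorem, trigonometric form.) Let a, b, c ∈ (0, π) and α, β, γ ∈ (0, π) satisfy the spherical law of cosines for all three sides: cos a = cos b·cos c + sin b·sin c·cos α, cos b = cos c·cos a + sin c·sin a·cos β, and cos c = cos a·cos b + sin a·sin b·cos γ. If α = β + γ, then cos a = cos b + cos c − 1. -/
/-!
Write `A, B, C` for the cosines of the sides. Applying the law of cosines at two vertices shows
that `(sin c sin a sin β)²` and `(sin a sin b sin γ)²` both equal the Gram determinant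
`1 - A² - B² - C² + 2ABC`; by positivity the two products agree (the law of sines). Multiplying
`cos α = cos β cos γ - sin β sin γ` by `sin² a sin b sin c` and substituting the laws of cosines
turns the hypothesis `α = β + γ` into `(1 - A)(1 + A + B + C)(1 + A - B - C) = 0`. The first
factor is nonzero as `0 < a < π`, and if the second one vanished, both `cos β` and `cos γ` would
be negative, forcing `β + γ > π`.
-/

open Real

/-- The Gram determinant of three unit vectors with pairwise inner products `x, y, z`. -/
def sphericalGram (x y z : ℝ) : ℝ := 1 - x ^ 2 - y ^ 2 - z ^ 2 + 2 * x * y * z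

lemma sphericalGram_rotate (x y z : ℝ) : sphericalGram y z x = sphericalGram x y z := by
  unfold sphericalGram; ring

lemma sq_sin_mul_sin_mul_sin_eq_sphericalGram {a b c β : ℝ}
    (law_b : cos b = cos c * cos a + sin c * sin a * cos β) :
    (sin c * sin a * sin β) ^ 2 = sphericalGram (cos a) (cos b) (cos c) := by
  unfold sphericalGram
  linear_combination (sin c ^ 2 * sin a ^ 2) * sin_sq_add_cos_sq β
    + (sin c * sin a * cos β + (cos b - cos c * cos a)) * law_b
    + sin a ^ 2 * sin_sq_add_cos_sq c + (1 - cos c ^ 2) * sin_sq_add_cos_sq a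

lemma spherical_law_sin {a b c β γ : ℝ}
    (law_b : cos b = cos c * cos a + sin c * sin a * cos β)
    (law_c : cos c = cos a * cos b + sin a * sin b * cos γ)
    (hβ : 0 ≤ sin c * sin a * sin β) (hγ : 0 ≤ sin a * sin b * sin γ) :
    sin c * sin a * sin β = sin a * sin b * sin γ := by
  refine (pow_left_inj₀ hβ hγ two_ne_zero).1 ?_
  rw [sq_sin_mul_sin_mul_sin_eq_sphericalGram law_b,
    sq_sin_mul_sin_mul_sin_eq_sphericalGram law_c, sphericalGram_rotate (cos a)]

lemma one_sub_cos_mul_mul_eq_zero_of_cos_add {a b c α β γ : ℝ}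
    (law_a : cos a = cos b * cos c + sin b * sin c * cos α)
    (law_b : cos b = cos c * cos a + sin c * sin a * cos β)
    (law_c : cos c = cos a * cos b + sin a * sin b * cos γ)
    (hsin : sin c * sin a * sin β = sin a * sin b * sin γ) (hα : α = β + γ) :
    (1 - cos a) * (1 + cos a + cos b + cos c) * (1 + cos a - cos b - cos c) = 0 := by
  have hcos : cos α = cos β * cos γ - sin β * sin γ := by rw [hα, cos_add]
  have hgram := sq_sin_mul_sin_mul_sin_eq_sphericalGram law_b
  unfold sphericalGram at hgram
  linear_combination sin a ^ 2 * law_a + sin a ^ 2 * sin b * sin c * hcos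
    - (cos c - cos a * cos b) * law_b - sin c * sin a * cos β * law_c
    + sin c * sin a * sin β * hsin - (cos a - cos b * cos c) * sin_sq_add_cos_sq a - hgram

lemma cos_neg_of_one_add_cos_add_cos_add_cos_eq_zero {a b c β : ℝ}
    (law_b : cos b = cos c * cos a + sin c * sin a * cos β) (hsin : 0 < sin c * sin a)
    (ha : -1 < cos a) (hc : -1 < cos c) (h : 1 + cos a + cos b + cos c = 0) :
    cos β < 0 := by
  have hprod : sin c * sin a * cos β = -((1 + cos a) * (1 + cos c)) := by
    linear_combination -law_b + h
  have hpos : 0 < (1 + cos a) * (1 + cos c) := mul_pos (by linarith) (by linarith)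
  by_contra! hβ
  linarith [mul_nonneg hsin.le hβ]

lemma pi_div_two_lt_of_cos_neg {x : ℝ} (hx : 0 < x) (h : cos x < 0) : π / 2 < x := by
  by_contra! hle
  exact h.not_ge (cos_nonneg_of_mem_Icc ⟨by linarith [pi_pos], hle⟩)

lemma cos_mem_Ioo_of_mem_Ioo {x : ℝ} (hx : x ∈ Set.Ioo 0 π) : cos x ∈ Set.Ioo (-1) 1 := by
  constructor
  · simpa using cos_lt_cos_of_nonneg_of_le_pi hx.1.le le_rfl hx.2
  · simpa using cos_lt_cos_of_nonneg_of_le_pi le_rfl hx.2.le hx.1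

/-- **Spherical Pythagorean theorem, trigonometric form.** -/
theorem spherical_pythagoras_trig (a b c α β γ : ℝ)
    (ha : a ∈ Set.Ioo 0 π) (hb : b ∈ Set.Ioo 0 π) (hc : c ∈ Set.Ioo 0 π)
    (hα : α ∈ Set.Ioo 0 π) (hβ : β ∈ Set.Ioo 0 π) (hγ : γ ∈ Set.Ioo 0 π)
    (law_a : Real.cos a = Real.cos b * Real.cos c + Real.sin b * Real.sin c * Real.cos α)
    (law_b : Real.cos b = Real.cos c * Real.cos a + Real.sin c * Real.sin a * Real.cos β)
    (law_c : Real.cos c = Real.cos a * Real.cos b + Real.sin a * Real.sin b * Real.cos γ)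
    (hproper : α = β + γ) :
    Real.cos a = Real.cos b + Real.cos c - 1 := by
  have sa := sin_pos_of_mem_Ioo ha
  have sb := sin_pos_of_mem_Ioo hb
  have sc := sin_pos_of_mem_Ioo hc
  have sβ := sin_pos_of_mem_Ioo hβ
  have sγ := sin_pos_of_mem_Ioo hγ
  obtain ⟨ha₁, ha₂⟩ := cos_mem_Ioo_of_mem_Ioo ha
  have hb₁ := (cos_mem_Ioo_of_mem_Ioo hb).1
  have hc₁ := (cos_mem_Ioo_of_mem_Ioo hc).1
  have hsin := spherical_law_sin law_b law_c (by positivity) (by positivity)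
  rcases mul_eq_zero.1 (one_sub_cos_mul_mul_eq_zero_of_cos_add law_a law_b law_c hsin hproper)
    with h | hpyth
  · rcases mul_eq_zero.1 h with ha₀ | hsum
    · linarith
    · have hβ' := pi_div_two_lt_of_cos_neg hβ.1 <|
        cos_neg_of_one_add_cos_add_cos_add_cos_eq_zero law_b (by positivity) ha₁ hc₁ hsum
      have hγ' := pi_div_two_lt_of_cos_neg hγ.1 <|
        cos_neg_of_one_add_cos_add_cos_add_cos_eq_zero law_c (by positivity) hb₁ ha₁
          (by linarith)
      linarith [hα.2]
  · linarith
end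

section
/- (Calapso's hyperbolic Pythagorean theorem, trigonometric form.) Let a, b, c > 0 and α, β, γ ∈ (0, π) satisfy the hyperbolic law of cosines for all three sides: cosh a = cosh b·cosh c − sinh b·sinh c·cos α, cosh b = cosh c·cosh a − sinh c·sinh a·cos β, and cosh c = cosh a·cosh b − sinh a·sinh b·cos γ. If α = β + γ, then cosh a = cosh b + cosh c − 1. -/
open Real

/-!
Put `A = cosh a`, `B = cosh b`, `C = cosh c`. By the law of cosines and `sin² = 1 - cos²`,
each of `sinh c sinh a sin β` and `sinh a sinh b sin γ` squares to the Gram determinant `D` of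
the triangle, so, both being positive, their product is `D` itself. Multiplying the law of cosines
for `a` by `sinh² a` and expanding `cos α = cos (β + γ)` then gives the polynomial relation
`(A² - 1)(BC - A) = (CA - B)(AB - C) - D`, which factors as
`(A - 1)(A + B + C + 1)(B + C - A - 1) = 0`.
-/

/-- The determinant of the Gram matrix `!![1, z, y; z, 1, x; y, x, 1]`; for the vertices of a
hyperbolic triangle in the hyperboloid model, `x, y, z` are the `cosh` of the side lengths. -/
def gramDet (x y z : ℝ) : ℝ := 1 - x ^ 2 - y ^ 2 - z ^ 2 + 2 * x * y * z

theorem gramDet_rotate (x y z : ℝ) : gramDet x y z = gramDet y z x := by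
  unfold gramDet
  ring

theorem sq_sinh_mul_sinh_mul_sin_eq_gramDet {x y z θ : ℝ}
    (h : cosh y = cosh z * cosh x - sinh z * sinh x * cos θ) :
    (sinh z * sinh x * sin θ) ^ 2 = gramDet (cosh x) (cosh y) (cosh z) := by
  have hcos : sinh z * sinh x * cos θ = cosh z * cosh x - cosh y := by linarith
  calc (sinh z * sinh x * sin θ) ^ 2
      = sinh z ^ 2 * sinh x ^ 2 - (sinh z * sinh x * cos θ) ^ 2 := by
        linear_combination (sinh z * sinh x) ^ 2 * sin_sq θ
    _ = (cosh z ^ 2 - 1) * (cosh x ^ 2 - 1) - (cosh z * cosh x - cosh y) ^ 2 := by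
      rw [hcos, sinh_sq, sinh_sq]
    _ = gramDet (cosh x) (cosh y) (cosh z) := by unfold gramDet; ring

theorem mul_eq_of_sq_eq_of_sq_eq {R : Type*} [CommRing R] [LinearOrder R] [IsStrictOrderedRing R]
    {u v d : R} (hu : u ^ 2 = d) (hv : v ^ 2 = d) (huv : 0 ≤ u * v) : u * v = d := by
  rcases sq_eq_sq_iff_eq_or_eq_neg.mp (hu.trans hv.symm) with rfl | rfl
  · rw [← hu, sq]
  · nlinarith [sq_nonneg v]

theorem cosh_eq_cosh_add_cosh_sub_one_of_gramDet {a b c : ℝ} (ha : a ≠ 0)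
    (h : sinh a ^ 2 * (cosh b * cosh c - cosh a) =
      (cosh c * cosh a - cosh b) * (cosh a * cosh b - cosh c) -
        gramDet (cosh a) (cosh b) (cosh c)) :
    cosh a = cosh b + cosh c - 1 := by
  have hfactor :
      (cosh a - 1) * (cosh a + cosh b + cosh c + 1) * (cosh b + cosh c - cosh a - 1) = 0 := by
    unfold gramDet at h
    linear_combination h - sinh_sq a * (cosh b * cosh c - cosh a)
  have ha1 : cosh a - 1 ≠ 0 := sub_ne_zero.mpr (one_lt_cosh.mpr ha).ne'
  have hsum : cosh a + cosh b + cosh c + 1 ≠ 0 := by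
    linarith [one_le_cosh a, one_le_cosh b, one_le_cosh c]
  have := (mul_eq_zero.mp hfactor).resolve_left (mul_ne_zero ha1 hsum)
  linarith

theorem hyperbolic_pythagoras_trig_general (a b c α β γ : ℝ)
    (ha : 0 < a) (hb : 0 < b) (hc : 0 < c)
    (hβ : β ∈ Set.Ioo 0 π) (hγ : γ ∈ Set.Ioo 0 π)
    (law_a : Real.cosh a = Real.cosh b * Real.cosh c - Real.sinh b * Real.sinh c * Real.cos α)
    (law_b : Real.cosh b = Real.cosh c * Real.cosh a - Real.sinh c * Real.sinh a * Real.cos β)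
    (law_c : Real.cosh c = Real.cosh a * Real.cosh b - Real.sinh a * Real.sinh b * Real.cos γ)
    (hproper : α = β + γ) :
    Real.cosh a = Real.cosh b + Real.cosh c - 1 := by
  have hsinβ := sin_pos_of_pos_of_lt_pi hβ.1 hβ.2
  have hsinγ := sin_pos_of_pos_of_lt_pi hγ.1 hγ.2
  have hprod : (sinh c * sinh a * sin β) * (sinh a * sinh b * sin γ) =
      gramDet (cosh a) (cosh b) (cosh c) :=
    mul_eq_of_sq_eq_of_sq_eq (sq_sinh_mul_sinh_mul_sin_eq_gramDet law_b)
      ((sq_sinh_mul_sinh_mul_sin_eq_gramDet law_c).trans (gramDet_rotate _ _ _).symm)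
      (by positivity)
  apply cosh_eq_cosh_add_cosh_sub_one_of_gramDet ha.ne'
  calc sinh a ^ 2 * (cosh b * cosh c - cosh a)
      = sinh a ^ 2 * (sinh b * sinh c * cos (β + γ)) := by rw [← hproper, law_a]; ring
    _ = (sinh c * sinh a * cos β) * (sinh a * sinh b * cos γ) -
          (sinh c * sinh a * sin β) * (sinh a * sinh b * sin γ) := by rw [cos_add]; ring
    _ = _ := by
      linear_combination (sinh c * sinh a * cos β) * law_c +
        (cosh a * cosh b - cosh c) * law_b - hprod

/-- **Calapso's hyperbolic Pythagorean theorem, trigonometric form.** -/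
theorem hyperbolic_pythagoras_trig (a b c α β γ : ℝ)
    (ha : 0 < a) (hb : 0 < b) (hc : 0 < c)
    (hα : α ∈ Set.Ioo 0 π) (hβ : β ∈ Set.Ioo 0 π) (hγ : γ ∈ Set.Ioo 0 π)
    (law_a : Real.cosh a = Real.cosh b * Real.cosh c - Real.sinh b * Real.sinh c * Real.cos α)
    (law_b : Real.cosh b = Real.cosh c * Real.cosh a - Real.sinh c * Real.sinh a * Real.cos β)
    (law_c : Real.cosh c = Real.cosh a * Real.cosh b - Real.sinh a * Real.sinh b * Real.cos γ)
    (hproper : α = β + γ) :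
    Real.cosh a = Real.cosh b + Real.cosh c - 1 :=
  hyperbolic_pythagoras_trig_general a b c α β γ ha hb hc hβ hγ law_a law_b law_c hproper
end

section
/- Let P be an affine plane in E³ whose intersection with the unit sphere S² contains at least two points. Then there exist a point c ∈ S² and a radius ρ ∈ (0, π) such that S² ∩ P = {p ∈ S² : d_S(p,c) = ρ}. Conversely, for every c ∈ S² and ρ ∈ (0, π), the spherical circle {p ∈ S² : d_S(p,c) = ρ} equals S² ∩ {p ∈ E³ : ⟪p, c⟫ = cos ρ}, the intersection of S² with an affine plane. Thus the circles of S² are precisely the intersections of S² with affine planes of E³ meeting S² in more than one point. -/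
open Real
open scoped RealInnerProductSpace

/-- The unit sphere `S²` in `E³`. -/
def unitSphere : Set (EuclideanSpace ℝ (Fin 3)) := {x | ‖x‖ = 1}

/-!
A plane with unit normal `n` is a level set `{p | ⟪p, n⟫ = d}`; two distinct unit vectors on it
force `-1 < d < 1`. On the sphere, `⟪p, c⟫ = cos ρ` is equivalent to `arccos ⟪p, c⟫ = ρ` for
`ρ ∈ [0, π]`, so the plane section is the circle about `n` of radius `arccos d`.
-/

section Hyperplane

variable {E : Type*} [NormedAddCommGroup E] [InnerProductSpace ℝ E]

theorem Submodule.exists_norm_eq_one_eq_orthogonal_span_singleton [FiniteDimensional ℝ E]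
    (K : Submodule ℝ E) (hK : Module.finrank ℝ K + 1 = Module.finrank ℝ E) :
    ∃ n : E, ‖n‖ = 1 ∧ K = (ℝ ∙ n)ᗮ := by
  have hKperp : Module.finrank ℝ Kᗮ = 1 := by
    have := K.finrank_add_finrank_orthogonal
    omega
  obtain ⟨v, hv, hv0⟩ :=
    Submodule.exists_mem_ne_zero_of_ne_bot (Submodule.one_le_finrank_iff.mp hKperp.ge)
  refine ⟨(‖v‖⁻¹ : ℝ) • v, norm_smul_inv_norm hv0, Submodule.eq_of_le_of_finrank_eq ?_ ?_⟩
  · rw [Submodule.le_orthogonal_iff_le_orthogonal, Submodule.span_singleton_le_iff_mem]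
    exact Submodule.smul_mem _ _ hv
  · have := (ℝ ∙ (‖v‖⁻¹ : ℝ) • v).finrank_add_finrank_orthogonal
    rw [finrank_span_singleton (by simpa using hv0)] at this
    omega

theorem AffineSubspace.mem_iff_inner_eq_of_direction_eq {P : AffineSubspace ℝ E} {n x : E}
    (hdir : P.direction = (ℝ ∙ n)ᗮ) (hx : x ∈ P) (p : E) : p ∈ P ↔ ⟪p, n⟫ = ⟪x, n⟫ := by
  rw [← AffineSubspace.vsub_right_mem_direction_iff_mem hx, hdir,
    Submodule.mem_orthogonal_singleton_iff_inner_left, vsub_eq_sub, inner_sub_left, sub_eq_zero]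

theorem AffineSubspace.exists_norm_eq_one_coe_eq_setOf_inner_eq [FiniteDimensional ℝ E]
    {P : AffineSubspace ℝ E} (hP : Module.finrank ℝ P.direction + 1 = Module.finrank ℝ E)
    {x : E} (hx : x ∈ P) : ∃ n : E, ‖n‖ = 1 ∧ (P : Set E) = {p | ⟪p, n⟫ = ⟪x, n⟫} := by
  obtain ⟨n, hn, hdir⟩ := P.direction.exists_norm_eq_one_eq_orthogonal_span_singleton hP
  exact ⟨n, hn, Set.ext (AffineSubspace.mem_iff_inner_eq_of_direction_eq hdir hx)⟩

theorem real_inner_mem_Ioo_of_ne {x y n : E} (hx : ‖x‖ = 1) (hy : ‖y‖ = 1) (hn : ‖n‖ = 1)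
    (hxy : x ≠ y) (h : ⟪x, n⟫ = ⟪y, n⟫) : ⟪x, n⟫ ∈ Set.Ioo (-1) 1 := by
  refine ⟨(neg_one_le_real_inner_of_norm_eq_one hx hn).lt_of_ne fun h₁ => hxy ?_,
    (real_inner_le_one_of_norm_eq_one hx hn).lt_of_ne fun h₁ => hxy ?_⟩
  · rw [(inner_eq_neg_one_iff_of_norm_eq_one hx hn).1 h₁.symm,
      (inner_eq_neg_one_iff_of_norm_eq_one hy hn).1 (h ▸ h₁.symm)]
  · rw [(inner_eq_one_iff_of_norm_eq_one hx hn).1 h₁,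
      (inner_eq_one_iff_of_norm_eq_one hy hn).1 (h ▸ h₁)]

end Hyperplane

theorem sphDist_eq_iff_inner_eq_cos {p c : EuclideanSpace ℝ (Fin 3)} (hp : p ∈ unitSphere)
    (hc : c ∈ unitSphere) {ρ : ℝ} (hρ : ρ ∈ Set.Icc 0 π) : sphDist p c = ρ ↔ ⟪p, c⟫ = cos ρ := by
  have h₁ := neg_one_le_real_inner_of_norm_eq_one hp hc
  have h₂ := real_inner_le_one_of_norm_eq_one hp hc
  constructor
  · rintro rfl
    exact (cos_arccos h₁ h₂).symm
  · intro h
    rw [sphDist, h, arccos_cos hρ.1 hρ.2]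

theorem setOf_sphDist_eq {c : EuclideanSpace ℝ (Fin 3)} (hc : c ∈ unitSphere) {ρ : ℝ}
    (hρ : ρ ∈ Set.Icc 0 π) :
    {p ∈ unitSphere | sphDist p c = ρ} = unitSphere ∩ {p | ⟪p, c⟫ = cos ρ} :=
  Set.ext fun _ => and_congr_right fun hp => sphDist_eq_iff_inner_eq_cos hp hc hρ

/-- The circles of `S²` are precisely the intersections of `S²` with affine
planes of `E³` meeting `S²` in more than one point. -/
theorem spherical_circles_are_plane_sections :
    (∀ P : AffineSubspace ℝ (EuclideanSpace ℝ (Fin 3)),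
      Module.finrank ℝ P.direction = 2 →
      (∃ x ∈ unitSphere ∩ (P : Set (EuclideanSpace ℝ (Fin 3))),
        ∃ y ∈ unitSphere ∩ (P : Set (EuclideanSpace ℝ (Fin 3))), x ≠ y) →
      ∃ c ∈ unitSphere, ∃ ρ ∈ Set.Ioo 0 π,
        unitSphere ∩ (P : Set (EuclideanSpace ℝ (Fin 3))) =
          {p ∈ unitSphere | sphDist p c = ρ}) ∧
    (∀ c ∈ unitSphere, ∀ ρ ∈ Set.Ioo 0 π,
        {p ∈ unitSphere | sphDist p c = ρ} =
          unitSphere ∩ {p | ⟪p, c⟫ = Real.cos ρ}) := by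
  refine ⟨?_, fun c hc ρ hρ => setOf_sphDist_eq hc (Set.Ioo_subset_Icc_self hρ)⟩
  rintro P hP ⟨x, ⟨hx, hxP⟩, y, ⟨hy, hyP⟩, hxy⟩
  obtain ⟨n, hn, hPn⟩ := AffineSubspace.exists_norm_eq_one_coe_eq_setOf_inner_eq
    (by simp [hP, finrank_euclideanSpace]) hxP
  have hd := real_inner_mem_Ioo_of_ne hx hy hn hxy ((Set.ext_iff.1 hPn y).1 hyP).symm
  refine ⟨n, hn, arccos ⟪x, n⟫, ⟨arccos_pos.2 hd.2, arccos_lt_pi.2 hd.1⟩, ?_⟩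
  rw [setOf_sphDist_eq hn ⟨(arccos_pos.2 hd.2).le, arccos_le_pi _⟩, cos_arccos hd.1.le hd.2.le, hPn]
end
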